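/- arXiv:2008.01412 — 2 statements merged into one kernel-verified Lean document; each statement's English description precedes it below -/
import Mathlib

section
/- Let ν be a symmetric measure on ℝ \ {0} with ∫ min(1, y²) ν(dy) < ∞. Suppose there is 0 < θ < 2 with limsup_{y→∞} y^θ ν({u : |u| > y}) < ∞. Then there is a constant C such that V(x) := ∫₀^∞ min(|xy|², 1) ν(dy) satisfies V(x) ≤ C|x|^θ for all |x| ≤ 1. -/
/-!
Split the integral at `y = 1`. On `(0, 1]`, `min (x²y²) 1 ≤ |x|^θ min 1 y²` because `x² ≤ |x|^θ`
for `|x| ≤ 1`, so this part is at most `|x|^θ ∫ min 1 y² dν`. The tail hypothesis, together with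
`ν {|u| > 1} ≤ ∫ min 1 y² dν < ∞`, gives `ν {|u| > s} ≤ B s^(-θ)` for all `s ≥ 1`. On `(1, ∞)`,
dominating `min (x²y²) 1` by `∑ₙ 4⁻ⁿ 𝟙{y > 2^(-n-1)/|x|}` turns the integral into the geometric
series `B 2^θ |x|^θ ∑ₙ (2^θ/4)ⁿ`, which converges because `θ < 2`.
-/

open MeasureTheory Set Filter ENNReal

lemma exists_one_lt_two_pow_succ_mul_and_min_sq_le {w : ℝ} (hw : 0 < w) :
    ∃ n : ℕ, 1 < 2 ^ (n + 1) * w ∧ min (w ^ 2) 1 ≤ (1 / 4) ^ n := by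
  rcases le_or_gt 1 w with h1 | h1
  · exact ⟨0, by norm_num; linarith, by simp⟩
  obtain ⟨n, hn, hn1⟩ := exists_nat_pow_near ((one_le_inv₀ hw).2 h1.le) one_lt_two
  refine ⟨n, (inv_lt_iff_one_lt_mul₀ hw).1 hn1, (min_le_left _ _).trans ?_⟩
  calc w ^ 2 ≤ ((2 : ℝ) ^ n)⁻¹ ^ 2 := by
        gcongr
        exact (le_inv_comm₀ (by positivity) hw).1 hn
    _ = (1 / 4) ^ n := by rw [← inv_pow, ← pow_mul, mul_comm, pow_mul]; norm_num

lemma min_sq_mul_le_rpow_mul_min_one_sq {x y θ : ℝ} (hx : |x| ≤ 1) (hy : |y| ≤ 1) (hθ0 : 0 ≤ θ)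
    (hθ2 : θ ≤ 2) : min (|x * y| ^ 2) 1 ≤ |x| ^ θ * min 1 (y ^ 2) := by
  have hx2 : x ^ 2 ≤ |x| ^ θ := by
    calc x ^ 2 = |x| ^ (2 : ℝ) := by rw [Real.rpow_two, sq_abs]
      _ ≤ |x| ^ θ := Real.rpow_le_rpow_of_exponent_ge' (abs_nonneg x) hx hθ0 hθ2
  rw [min_eq_right ((sq_le_one_iff_abs_le_one y).2 hy)]
  calc min (|x * y| ^ 2) 1 ≤ |x * y| ^ 2 := min_le_left _ _
    _ = x ^ 2 * y ^ 2 := by rw [sq_abs, mul_pow]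
    _ ≤ |x| ^ θ * y ^ 2 := by gcongr

lemma exists_le_mul_rpow_neg_of_limsup_lt_top {f : ℝ → ℝ≥0∞} (hf : Antitone f) (hf1 : f 1 ≠ ⊤)
    {θ : ℝ} (hθ : 0 ≤ θ) (h : limsup (fun y : ℝ => ENNReal.ofReal (y ^ θ) * f y) atTop < ⊤) :
    ∃ B ≠ ⊤, ∀ y ≥ 1, f y ≤ B * ENNReal.ofReal (y ^ (-θ)) := by
  obtain ⟨M, hM, hMtop⟩ := exists_between h
  obtain ⟨R, hR⟩ := eventually_atTop.mp (eventually_lt_of_limsup_lt hM)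
  refine ⟨max M (ENNReal.ofReal (R ^ θ) * f 1),
    (max_lt hMtop (mul_lt_top ofReal_lt_top hf1.lt_top)).ne, fun y hy => ?_⟩
  have hy0 : 0 < y := zero_lt_one.trans_le hy
  have hbound : ENNReal.ofReal (y ^ θ) * f y ≤ max M (ENNReal.ofReal (R ^ θ) * f 1) := by
    rcases le_total R y with hRy | hyR
    · exact le_max_of_le_left (hR y hRy).le
    · exact le_max_of_le_right
        (mul_le_mul' (ofReal_le_ofReal (Real.rpow_le_rpow hy0.le hyR hθ)) (hf hy))
  calc f y = ENNReal.ofReal (y ^ (-θ)) * (ENNReal.ofReal (y ^ θ) * f y) := by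
        rw [← mul_assoc, ← ofReal_mul (by positivity), ← Real.rpow_add hy0, neg_add_cancel,
          Real.rpow_zero, ofReal_one, one_mul]
    _ ≤ ENNReal.ofReal (y ^ (-θ)) * max M (ENNReal.ofReal (R ^ θ) * f 1) := by gcongr
    _ = _ := mul_comm _ _

lemma measure_one_lt_abs_le_lintegral_min_one_sq (ν : Measure ℝ) :
    ν {u : ℝ | 1 < |u|} ≤ ∫⁻ y, ENNReal.ofReal (min 1 (y ^ 2)) ∂ν := by
  calc ν {u : ℝ | 1 < |u|} = ∫⁻ _ in {u : ℝ | 1 < |u|}, 1 ∂ν := (setLIntegral_one _).symm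
    _ ≤ ∫⁻ y in {u : ℝ | 1 < |u|}, ENNReal.ofReal (min 1 (y ^ 2)) ∂ν :=
        setLIntegral_mono' (measurableSet_lt measurable_const measurable_abs) fun y hy => by
          rw [min_eq_left (one_lt_sq_iff_one_lt_abs y |>.2 hy).le, ofReal_one]
    _ ≤ _ := setLIntegral_le_lintegral _ _

lemma measure_Ioi_inv_inter_Ioi_one_le {ν : Measure ℝ} {B : ℝ≥0∞} {θ : ℝ} (hθ : 0 ≤ θ)
    (hB : ∀ y ≥ 1, ν {u : ℝ | y < |u|} ≤ B * ENNReal.ofReal (y ^ (-θ))) {z : ℝ} (hz : 0 < z) :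
    ν (Ioi z⁻¹ ∩ Ioi 1) ≤ B * ENNReal.ofReal (z ^ θ) := by
  calc ν (Ioi z⁻¹ ∩ Ioi 1) ≤ ν {u : ℝ | max z⁻¹ 1 < |u|} :=
        measure_mono fun u hu => (max_lt hu.1 hu.2).trans_le (le_abs_self u)
    _ ≤ B * ENNReal.ofReal (max z⁻¹ 1 ^ (-θ)) := hB _ (le_max_right _ _)
    _ ≤ B * ENNReal.ofReal (z⁻¹ ^ (-θ)) := by
        gcongr B * ENNReal.ofReal ?_
        exact Real.rpow_le_rpow_of_nonpos (inv_pos.2 hz) (le_max_left _ _) (neg_nonpos.2 hθ)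
    _ = B * ENNReal.ofReal (z ^ θ) := by
        rw [Real.rpow_neg (inv_nonneg.2 hz.le), Real.inv_rpow hz.le, inv_inv]

lemma ofReal_min_sq_le_tsum_indicator {x y : ℝ} (hx : x ≠ 0) (hy : 0 < y) :
    ENNReal.ofReal (min (|x * y| ^ 2) 1) ≤
      ∑' n : ℕ, ENNReal.ofReal ((1 / 4) ^ n) * (Ioi (2 ^ (n + 1) * |x|)⁻¹).indicator 1 y := by
  obtain ⟨n, hn1, hn2⟩ :=
    exists_one_lt_two_pow_succ_mul_and_min_sq_le (abs_pos.2 (mul_ne_zero hx hy.ne'))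
  have hmem : y ∈ Ioi (2 ^ (n + 1) * |x|)⁻¹ := by
    rw [abs_mul, abs_of_pos hy, ← mul_assoc] at hn1
    exact (inv_lt_iff_one_lt_mul₀' (by positivity)).2 hn1
  calc ENNReal.ofReal (min (|x * y| ^ 2) 1)
        ≤ ENNReal.ofReal ((1 / 4) ^ n) * (Ioi (2 ^ (n + 1) * |x|)⁻¹).indicator 1 y := by
        rw [indicator_of_mem hmem, Pi.one_apply, mul_one]
        exact ofReal_le_ofReal hn2
    _ ≤ _ := ENNReal.le_tsum n

lemma setLIntegral_Ioc_min_sq_le (ν : Measure ℝ) {x θ : ℝ} (hx : |x| ≤ 1) (hθ0 : 0 ≤ θ)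
    (hθ2 : θ ≤ 2) :
    ∫⁻ y in Ioc 0 1, ENNReal.ofReal (min (|x * y| ^ 2) 1) ∂ν ≤
      (∫⁻ y, ENNReal.ofReal (min 1 (y ^ 2)) ∂ν) * ENNReal.ofReal (|x| ^ θ) := by
  calc ∫⁻ y in Ioc 0 1, ENNReal.ofReal (min (|x * y| ^ 2) 1) ∂ν
      ≤ ∫⁻ y in Ioc 0 1, ENNReal.ofReal (min 1 (y ^ 2)) * ENNReal.ofReal (|x| ^ θ) ∂ν :=
        setLIntegral_mono' measurableSet_Ioc fun y hy => by
          rw [← ofReal_mul (by positivity)]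
          exact ofReal_le_ofReal ((min_sq_mul_le_rpow_mul_min_one_sq hx
            (abs_le.2 ⟨by linarith [hy.1], hy.2⟩) hθ0 hθ2).trans_eq (mul_comm _ _))
    _ ≤ ∫⁻ y, ENNReal.ofReal (min 1 (y ^ 2)) * ENNReal.ofReal (|x| ^ θ) ∂ν :=
        setLIntegral_le_lintegral _ _
    _ = _ := lintegral_mul_const' _ _ ofReal_ne_top

lemma setLIntegral_Ioi_one_min_sq_le {ν : Measure ℝ} {B : ℝ≥0∞} {θ : ℝ} (hθ0 : 0 ≤ θ)
    (hθ2 : θ < 2) (hB : ∀ y ≥ 1, ν {u : ℝ | y < |u|} ≤ B * ENNReal.ofReal (y ^ (-θ)))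
    {x : ℝ} (hx : x ≠ 0) :
    ∫⁻ y in Ioi 1, ENNReal.ofReal (min (|x * y| ^ 2) 1) ∂ν ≤
      B * ENNReal.ofReal (2 ^ θ * (1 - 2 ^ θ / 4)⁻¹) * ENNReal.ofReal (|x| ^ θ) := by
  set q : ℝ := 2 ^ θ / 4 with hq
  have hq0 : 0 ≤ q := by positivity
  have hq1 : q < 1 := by
    rw [hq, div_lt_one four_pos]
    calc (2 : ℝ) ^ θ < 2 ^ (2 : ℝ) := Real.rpow_lt_rpow_of_exponent_lt one_lt_two hθ2
      _ = 4 := by norm_num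
  have hterm (n : ℕ) : ENNReal.ofReal ((1 / 4) ^ n) * ν (Ioi (2 ^ (n + 1) * |x|)⁻¹ ∩ Ioi 1) ≤
      B * ENNReal.ofReal (2 ^ θ * |x| ^ θ * q ^ n) := by
    calc _ ≤ ENNReal.ofReal ((1 / 4) ^ n) * (B * ENNReal.ofReal ((2 ^ (n + 1) * |x|) ^ θ)) := by
          gcongr
          exact measure_Ioi_inv_inter_Ioi_one_le hθ0 hB (by positivity)
      _ = B * ENNReal.ofReal ((1 / 4) ^ n * (2 ^ (n + 1) * |x|) ^ θ) := by
          rw [ofReal_mul (by positivity)]; ring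
      _ = _ := by
          rw [Real.mul_rpow (by positivity) (abs_nonneg x), ← Real.rpow_pow_comm zero_le_two, hq]
          congr 2
          ring
  have hmeas (n : ℕ) : Measurable fun y : ℝ =>
      ENNReal.ofReal ((1 / 4) ^ n) * (Ioi (2 ^ (n + 1) * |x|)⁻¹).indicator 1 y :=
    (measurable_one.indicator measurableSet_Ioi).const_mul _
  calc ∫⁻ y in Ioi 1, ENNReal.ofReal (min (|x * y| ^ 2) 1) ∂ν
      ≤ ∫⁻ y in Ioi 1, ∑' n : ℕ,
          ENNReal.ofReal ((1 / 4) ^ n) * (Ioi (2 ^ (n + 1) * |x|)⁻¹).indicator 1 y ∂ν :=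
        setLIntegral_mono' measurableSet_Ioi fun y hy =>
          ofReal_min_sq_le_tsum_indicator hx (zero_lt_one.trans hy)
    _ = ∑' n : ℕ, ENNReal.ofReal ((1 / 4) ^ n) * ν (Ioi (2 ^ (n + 1) * |x|)⁻¹ ∩ Ioi 1) := by
        rw [lintegral_tsum fun n => (hmeas n).aemeasurable]
        congr with n
        rw [lintegral_const_mul _ (measurable_one.indicator measurableSet_Ioi),
          lintegral_indicator_one measurableSet_Ioi, Measure.restrict_apply measurableSet_Ioi]
    _ ≤ ∑' n : ℕ, B * ENNReal.ofReal (2 ^ θ * |x| ^ θ * q ^ n) := ENNReal.tsum_le_tsum hterm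
    _ = B * ENNReal.ofReal (∑' n : ℕ, 2 ^ θ * |x| ^ θ * q ^ n) := by
        rw [ENNReal.tsum_mul_left, ofReal_tsum_of_nonneg (fun n => by positivity)
          ((summable_geometric_of_lt_one hq0 hq1).mul_left _)]
    _ = _ := by
        rw [tsum_mul_left, tsum_geometric_of_lt_one hq0 hq1, mul_assoc B,
          ← ofReal_mul (mul_nonneg (by positivity) (inv_nonneg.2 (by linarith)))]
        congr 2
        ring

theorem V_le_of_tail_theta_general (ν : Measure ℝ)
    (hint : ∫⁻ y, ENNReal.ofReal (min 1 (y ^ 2)) ∂ν < ⊤)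
    (θ : ℝ) (hθ0 : 0 < θ) (hθ2 : θ < 2)
    (htail : Filter.limsup
        (fun y : ℝ => ENNReal.ofReal (y ^ θ) * ν {u : ℝ | y < |u|}) Filter.atTop < ⊤) :
    ∃ C : ℝ, ∀ x : ℝ, |x| ≤ 1 →
      (∫⁻ y in Ioi (0:ℝ), ENNReal.ofReal (min (|x * y| ^ 2) 1) ∂ν)
        ≤ ENNReal.ofReal (C * |x| ^ θ) := by
  obtain ⟨B, hB, hBtail⟩ := exists_le_mul_rpow_neg_of_limsup_lt_top
    (f := fun y => ν {u : ℝ | y < |u|}) (fun _ _ hst => measure_mono fun _ hu => hst.trans_lt hu)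
    ((measure_one_lt_abs_le_lintegral_min_one_sq ν).trans_lt hint).ne hθ0.le htail
  set I := ∫⁻ y, ENNReal.ofReal (min 1 (y ^ 2)) ∂ν
  set K : ℝ := 2 ^ θ * (1 - 2 ^ θ / 4)⁻¹
  refine ⟨(I + B * ENNReal.ofReal K).toReal, fun x hx => ?_⟩
  obtain rfl | hx0 := eq_or_ne x 0
  · simp
  calc ∫⁻ y in Ioi 0, ENNReal.ofReal (min (|x * y| ^ 2) 1) ∂ν
      ≤ (∫⁻ y in Ioc 0 1, ENNReal.ofReal (min (|x * y| ^ 2) 1) ∂ν)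
        + ∫⁻ y in Ioi 1, ENNReal.ofReal (min (|x * y| ^ 2) 1) ∂ν := by
        rw [← Ioc_union_Ioi_eq_Ioi zero_le_one]
        exact lintegral_union_le _ _ _
    _ ≤ I * ENNReal.ofReal (|x| ^ θ) + B * ENNReal.ofReal K * ENNReal.ofReal (|x| ^ θ) :=
        add_le_add (setLIntegral_Ioc_min_sq_le ν hx hθ0.le hθ2.le)
          (setLIntegral_Ioi_one_min_sq_le hθ0.le hθ2 hBtail hx0)
    _ = ENNReal.ofReal ((I + B * ENNReal.ofReal K).toReal * |x| ^ θ) := by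
        rw [← add_mul, ofReal_mul toReal_nonneg,
          ofReal_toReal (add_ne_top.2 ⟨hint.ne, mul_ne_top hB ofReal_ne_top⟩)]

/-- If `ν` is a symmetric measure on `ℝ \ {0}` integrating `min(1, y²)` and
`limsup_{y→∞} y^θ ν{|u|>y} < ∞` for some `0 < θ < 2`, then
`V(x) = ∫₀^∞ min(|xy|², 1) ν(dy) ≤ C |x|^θ` for all `|x| ≤ 1`. -/
theorem V_le_of_tail_theta (ν : Measure ℝ) (hzero : ν {0} = 0)
    (hsym : ν.map (fun y => -y) = ν)
    (hint : ∫⁻ y, ENNReal.ofReal (min 1 (y ^ 2)) ∂ν < ⊤)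
    (θ : ℝ) (hθ0 : 0 < θ) (hθ2 : θ < 2)
    (htail : Filter.limsup
        (fun y : ℝ => ENNReal.ofReal (y ^ θ) * ν {u : ℝ | y < |u|}) Filter.atTop < ⊤) :
    ∃ C : ℝ, ∀ x : ℝ, |x| ≤ 1 →
      (∫⁻ y in Ioi (0:ℝ), ENNReal.ofReal (min (|x * y| ^ 2) 1) ∂ν)
        ≤ ENNReal.ofReal (C * |x| ^ θ) :=
  V_le_of_tail_theta_general ν hint θ hθ0 hθ2 htail
end

section
/- Let h(s) = ‖s‖^{dα} on ℝ^d with α < 1. There exist constants C > 0 and R > 0 such that for all y ∈ ℝ^d with ‖y‖ ≥ R, the rectangular unit increment satisfies |Δ₁h(y)| ≤ C ‖y‖^{d(α−1)}. -/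
open MeasureTheory Set

noncomputable def euclNorm {d : ℕ} (x : Fin d → ℝ) : ℝ := Real.sqrt (∑ i, (x i) ^ 2)

/-- Rectangular increment of `g` over the cube `[x, x + r·1]`:
`Δ_r g(x) = ∑_{ε ∈ {0,1}^d} (−1)^{d+∑ε_j} g(x + rε)`. -/
noncomputable def rinc {d : ℕ} (g : (Fin d → ℝ) → ℝ) (r : ℝ) (x : Fin d → ℝ) : ℝ :=
  ∑ ε : Fin d → Bool,
    (-1 : ℝ) ^ (d + (Finset.univ.filter (fun i => ε i)).card) *
      g (x + fun i => if ε i then r else 0)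

/-!
`h` is smooth away from the origin and positively homogeneous of degree `dα`, so each partial
derivative is again of this kind with the degree lowered by one, and the mixed partial `∂^d h` is
homogeneous of degree `d(α - 1)`; by compactness of the unit sphere it is bounded by
`C ‖y‖^{d(α-1)}`. Applying the mean value theorem one coordinate at a time writes `Δ₁h(y)` as
`∂^d h(ξ)` for a point `ξ` of the unit cube at `y`, and `‖ξ‖ ≥ ‖y‖ / 2` once `‖y‖ ≥ 2√d`.
-/

open scoped ContDiff

section PosHomogeneous

variable {E : Type*} [NormedAddCommGroup E] [NormedSpace ℝ E]

def PosHomogeneous (w : ℝ) (g : E → ℝ) : Prop :=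
  ∀ x ≠ (0 : E), ∀ t : ℝ, 0 < t → g (t • x) = t ^ w * g x

theorem PosHomogeneous.fderiv_apply {w : ℝ} {g : E → ℝ} (hg : PosHomogeneous w g)
    (hdiff : DifferentiableOn ℝ g {0}ᶜ) (v : E) :
    PosHomogeneous (w - 1) (fun x => fderiv ℝ g x v) := by
  intro x hx t ht
  -- differentiate `g (t • y) = t ^ w * g y` in `y` at `x`
  have hopen : IsOpen ({0}ᶜ : Set E) := isOpen_compl_singleton
  have htx : t • x ≠ 0 := smul_ne_zero ht.ne' hx
  have hscaled : HasFDerivAt (fun y => g (t • y))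
      ((fderiv ℝ g (t • x)).comp (t • ContinuousLinearMap.id ℝ E)) x :=
    ((hdiff _ htx).differentiableAt (hopen.mem_nhds htx)).hasFDerivAt.comp x
      ((hasFDerivAt_id x).const_smul t)
  have heq : (fun y => g (t • y)) =ᶠ[nhds x] fun y => t ^ w * g y :=
    Filter.eventually_of_mem (hopen.mem_nhds hx) fun y hy => hg y hy t ht
  have hrhs : HasFDerivAt (fun y => t ^ w * g y) (t ^ w • fderiv ℝ g x) x :=
    ((hdiff _ hx).differentiableAt (hopen.mem_nhds hx)).hasFDerivAt.const_mul _
  have hchain := congrArg (fun L => L v) ((hscaled.congr_of_eventuallyEq heq.symm).unique hrhs)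
  simp only [ContinuousLinearMap.comp_apply, FunLike.coe_smul, Pi.smul_apply,
    ContinuousLinearMap.id_apply, map_smul, smul_eq_mul] at hchain
  rw [Real.rpow_sub_one ht.ne']
  field_simp
  linarith

theorem PosHomogeneous.exists_bound [FiniteDimensional ℝ E] {w : ℝ} {g : E → ℝ}
    (hg : PosHomogeneous w g) (hcont : ContinuousOn g {0}ᶜ) :
    ∃ M > 0, ∀ x ≠ (0 : E), |g x| ≤ M * ‖x‖ ^ w := by
  obtain ⟨M, hM⟩ := (isCompact_sphere (0 : E) 1).exists_bound_of_continuousOn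
    (hcont.mono fun x hx => by rintro rfl; simp at hx)
  refine ⟨max M 1, by positivity, fun x hx => ?_⟩
  have hnx : 0 < ‖x‖ := norm_pos_iff.mpr hx
  have hu : ‖x‖⁻¹ • x ∈ Metric.sphere (0 : E) 1 := by
    simp [norm_smul, hnx.ne']
  have hux : ‖x‖⁻¹ • x ≠ 0 := by simpa [hnx.ne'] using hx
  calc |g x| = |g (‖x‖ • (‖x‖⁻¹ • x))| := by rw [smul_inv_smul₀ hnx.ne']
    _ = ‖x‖ ^ w * |g (‖x‖⁻¹ • x)| := by
      rw [hg _ hux _ hnx, abs_mul, abs_of_pos (Real.rpow_pos_of_pos hnx w)]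
    _ ≤ ‖x‖ ^ w * max M 1 := by gcongr; exact (hM _ hu).trans (le_max_left M 1)
    _ = max M 1 * ‖x‖ ^ w := mul_comm _ _

end PosHomogeneous

section Cube

variable {d : ℕ}

noncomputable def partialDeriv (i : Fin d) (g : (Fin d → ℝ) → ℝ) (x : Fin d → ℝ) : ℝ :=
  fderiv ℝ g x (Pi.single i 1)

noncomputable def iteratedPartial : List (Fin d) → ((Fin d → ℝ) → ℝ) → (Fin d → ℝ) → ℝ
  | [], g => g
  | i :: l, g => iteratedPartial l (partialDeriv i g)

def cubeVertex (t : Finset (Fin d)) : Fin d → ℝ := fun i => if i ∈ t then 1 else 0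

@[simp] theorem cubeVertex_empty : cubeVertex (∅ : Finset (Fin d)) = 0 := by
  ext; simp [cubeVertex]

@[simp] theorem cubeVertex_univ : cubeVertex (Finset.univ : Finset (Fin d)) = 1 := by
  ext; simp [cubeVertex]

theorem cubeVertex_nonneg (t : Finset (Fin d)) : 0 ≤ cubeVertex t := fun i => by
  unfold cubeVertex; split_ifs <;> norm_num

theorem cubeVertex_mono {s t : Finset (Fin d)} (h : t ⊆ s) : cubeVertex t ≤ cubeVertex s :=
    fun i => by
  unfold cubeVertex; split_ifs with ht hs
  exacts [le_rfl, absurd (h ht) hs, zero_le_one, le_rfl]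

noncomputable def cubeIncrement (s : Finset (Fin d)) (g : (Fin d → ℝ) → ℝ) (x : Fin d → ℝ) : ℝ :=
  ∑ t ∈ s.powerset, (-1 : ℝ) ^ (s.card + t.card) * g (x + cubeVertex t)

theorem rinc_one_eq_cubeIncrement_univ (g : (Fin d → ℝ) → ℝ) (y : Fin d → ℝ) :
    rinc g 1 y = cubeIncrement Finset.univ g y := by
  rw [cubeIncrement, Finset.powerset_univ, Finset.card_univ, Fintype.card_fin, rinc]
  refine Fintype.sum_bijective (fun ε => Finset.univ.filter (ε ·)) ?_ _ _ fun ε => ?_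
  · exact Function.bijective_iff_has_inverse.mpr
      ⟨fun t i => decide (i ∈ t), fun ε => by ext; simp, fun t => by ext; simp⟩
  · congr 3
    ext i
    simp [cubeVertex]

theorem add_cubeVertex_insert {a : Fin d} {t : Finset (Fin d)} (hat : a ∉ t) (x : Fin d → ℝ) :
    x + cubeVertex (insert a t) = Function.update x a (x a + 1) + cubeVertex t := by
  ext i
  rcases eq_or_ne i a with rfl | hi
  · simp [cubeVertex, hat]
  · simp [cubeVertex, hi]

theorem cubeIncrement_insert {a : Fin d} {s : Finset (Fin d)} (ha : a ∉ s)
    (g : (Fin d → ℝ) → ℝ) (x : Fin d → ℝ) :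
    cubeIncrement (insert a s) g x
      = cubeIncrement s g (Function.update x a (x a + 1)) - cubeIncrement s g x := by
  rw [cubeIncrement, Finset.sum_powerset_insert ha, cubeIncrement, cubeIncrement, sub_eq_neg_add,
    ← Finset.sum_neg_distrib, Finset.card_insert_of_notMem ha]
  congr 1
  · refine Finset.sum_congr rfl fun t _ => ?_
    rw [add_right_comm, pow_succ]; ring
  · refine Finset.sum_congr rfl fun t ht => ?_
    have hat : a ∉ t := fun h => ha (Finset.mem_powerset.mp ht h)
    rw [Finset.card_insert_of_notMem hat, add_cubeVertex_insert hat]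
    ring

theorem ContDiffOn.partialDeriv {U : Set (Fin d → ℝ)} {g : (Fin d → ℝ) → ℝ}
    (hg : ContDiffOn ℝ ∞ g U) (hU : IsOpen U) (i : Fin d) :
    ContDiffOn ℝ ∞ (partialDeriv i g) U :=
  (hg.fderiv_of_isOpen hU (by simp)).clm_apply contDiffOn_const

theorem hasDerivAt_cubeIncrement_update {a : Fin d} {s : Finset (Fin d)} {g : (Fin d → ℝ) → ℝ}
    {x : Fin d → ℝ} {u : ℝ}
    (hg : ∀ t ⊆ s, DifferentiableAt ℝ g (Function.update x a u + cubeVertex t)) :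
    HasDerivAt (fun v => cubeIncrement s g (Function.update x a v))
      (cubeIncrement s (partialDeriv a g) (Function.update x a u)) u := by
  refine HasDerivAt.fun_sum fun t ht => HasDerivAt.const_mul _ ?_
  exact (hg t (Finset.mem_powerset.mp ht)).hasFDerivAt.comp_hasDerivAt u
    ((hasDerivAt_update x a u).add_const _)

theorem update_add_cubeVertex_mem_Icc {a : Fin d} {s t : Finset (Fin d)} (ha : a ∉ s) (ht : t ⊆ s)
    {x : Fin d → ℝ} {v : ℝ} (hv : v ∈ Icc (x a) (x a + 1)) :
    Function.update x a v + cubeVertex t ∈ Icc x (x + cubeVertex (insert a s)) := by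
  have hat : a ∉ t := fun h => ha (ht h)
  constructor <;> intro i <;> rcases eq_or_ne i a with rfl | hi
  · simpa [cubeVertex, hat] using hv.1
  · simpa [hi] using cubeVertex_nonneg t i
  · simpa [cubeVertex, hat] using hv.2
  · simpa [hi] using cubeVertex_mono (ht.trans (Finset.subset_insert a s)) i

theorem exists_cubeIncrement_insert_eq {a : Fin d} {s : Finset (Fin d)} (ha : a ∉ s)
    {U : Set (Fin d → ℝ)} (hU : IsOpen U) {g : (Fin d → ℝ) → ℝ} (hg : DifferentiableOn ℝ g U)
    {x : Fin d → ℝ} (hbox : Icc x (x + cubeVertex (insert a s)) ⊆ U) :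
    ∃ τ ∈ Ioo (x a) (x a + 1),
      cubeIncrement (insert a s) g x
        = cubeIncrement s (partialDeriv a g) (Function.update x a τ) := by
  have hderiv : ∀ v ∈ Icc (x a) (x a + 1),
      HasDerivAt (fun v => cubeIncrement s g (Function.update x a v))
        (cubeIncrement s (partialDeriv a g) (Function.update x a v)) v := fun v hv =>
    hasDerivAt_cubeIncrement_update fun t ht =>
      hg.differentiableAt (hU.mem_nhds (hbox (update_add_cubeVertex_mem_Icc ha ht hv)))
  obtain ⟨τ, hτ, hslope⟩ := exists_hasDerivAt_eq_slope _ _ (lt_add_one (x a))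
    (fun v hv => (hderiv v hv).continuousAt.continuousWithinAt)
    (fun v hv => hderiv v (Ioo_subset_Icc_self hv))
  refine ⟨τ, hτ, ?_⟩
  rw [hslope, cubeIncrement_insert ha, Function.update_eq_self, add_sub_cancel_left, div_one]

theorem exists_cubeIncrement_eq_iteratedPartial {l : List (Fin d)} (hl : l.Nodup)
    {U : Set (Fin d → ℝ)} (hU : IsOpen U) {g : (Fin d → ℝ) → ℝ} (hg : ContDiffOn ℝ ∞ g U)
    {x : Fin d → ℝ} (hbox : Icc x (x + cubeVertex l.toFinset) ⊆ U) :
    ∃ ξ ∈ Icc x (x + cubeVertex l.toFinset),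
      cubeIncrement l.toFinset g x = iteratedPartial l g ξ := by
  induction l generalizing g x with
  | nil => exact ⟨x, by simp, by simp [cubeIncrement, iteratedPartial]⟩
  | cons a l ih =>
    rw [List.nodup_cons] at hl
    have ha : a ∉ l.toFinset := by simpa using hl.1
    rw [List.toFinset_cons] at hbox ⊢
    obtain ⟨τ, hτ, hstep⟩ :=
      exists_cubeIncrement_insert_eq ha hU (hg.differentiableOn (by simp)) hbox
    have hsub : Icc (Function.update x a τ) (Function.update x a τ + cubeVertex l.toFinset)
        ⊆ Icc x (x + cubeVertex (insert a l.toFinset)) := by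
      refine Icc_subset_Icc (fun i => ?_) (fun i => ?_) <;> rcases eq_or_ne i a with rfl | hi
      · simpa using hτ.1.le
      · simp [hi]
      · simpa [cubeVertex, ha] using hτ.2.le
      · simpa [hi] using cubeVertex_mono (Finset.subset_insert a l.toFinset) i
    obtain ⟨ξ, hξ, heq⟩ := ih hl.2 (hg.partialDeriv hU a) (hsub.trans hbox)
    exact ⟨ξ, hsub hξ, hstep.trans heq⟩

theorem exists_rinc_eq_iteratedPartial {U : Set (Fin d → ℝ)} (hU : IsOpen U)
    {g : (Fin d → ℝ) → ℝ} (hg : ContDiffOn ℝ ∞ g U) {y : Fin d → ℝ} (hbox : Icc y (y + 1) ⊆ U) :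
    ∃ ξ ∈ Icc y (y + 1), rinc g 1 y = iteratedPartial (List.finRange d) g ξ := by
  rw [rinc_one_eq_cubeIncrement_univ, ← List.toFinset_finRange]
  exact exists_cubeIncrement_eq_iteratedPartial (List.nodup_finRange d) hU hg (by simpa using hbox)
    |>.imp fun ξ ⟨hξ, heq⟩ => ⟨by simpa using hξ, heq⟩

theorem ContDiffOn.iteratedPartial {U : Set (Fin d → ℝ)} {g : (Fin d → ℝ) → ℝ}
    (hg : ContDiffOn ℝ ∞ g U) (hU : IsOpen U) (l : List (Fin d)) :
    ContDiffOn ℝ ∞ (iteratedPartial l g) U := by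
  induction l generalizing g with
  | nil => exact hg
  | cons a l ih => exact ih (hg.partialDeriv hU a)

theorem PosHomogeneous.iteratedPartial {w : ℝ} {g : (Fin d → ℝ) → ℝ} (hg : PosHomogeneous w g)
    (hsmooth : ContDiffOn ℝ ∞ g {0}ᶜ) (l : List (Fin d)) :
    PosHomogeneous (w - l.length) (iteratedPartial l g) := by
  induction l generalizing w g with
  | nil => rwa [List.length_nil, Nat.cast_zero, sub_zero]
  | cons a l ih =>
    have hda := ih (hg.fderiv_apply (hsmooth.differentiableOn (by simp)) (Pi.single a 1))
      (hsmooth.partialDeriv isOpen_compl_singleton a)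
    rwa [List.length_cons, Nat.cast_succ, ← sub_sub, sub_right_comm]

end Cube

section Euclidean

variable {d : ℕ}

@[simp] theorem euclNorm_zero : euclNorm (0 : Fin d → ℝ) = 0 := by
  simp [euclNorm]

theorem euclNorm_eq_norm_toLp (x : Fin d → ℝ) : euclNorm x = ‖WithLp.toLp 2 x‖ := by
  simp [euclNorm, EuclideanSpace.norm_eq]

theorem PosHomogeneous.exists_bound_euclNorm {w : ℝ} {g : (Fin d → ℝ) → ℝ}
    (hg : PosHomogeneous w g) (hcont : ContinuousOn g {0}ᶜ) :
    ∃ M > 0, ∀ x ≠ 0, |g x| ≤ M * euclNorm x ^ w := by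
  have hg' : PosHomogeneous w (g ∘ WithLp.ofLp (p := 2)) := fun x hx t ht =>
    hg _ (by simpa using hx) t ht
  obtain ⟨M, hM0, hM⟩ := hg'.exists_bound
    (hcont.comp (PiLp.continuous_ofLp 2 _).continuousOn fun x hx => by simpa using hx)
  refine ⟨M, hM0, fun x hx => ?_⟩
  simpa [euclNorm_eq_norm_toLp] using hM (WithLp.toLp 2 x) (by simpa using hx)

theorem posHomogeneous_euclNorm_rpow (c : ℝ) :
    PosHomogeneous c fun x : Fin d → ℝ => euclNorm x ^ c :=
  fun x _ t ht => by
    dsimp only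
    rw [euclNorm_eq_norm_toLp, euclNorm_eq_norm_toLp, WithLp.toLp_smul, norm_smul,
      Real.norm_of_nonneg ht.le, Real.mul_rpow ht.le (norm_nonneg _)]

theorem contDiffOn_euclNorm_rpow (c : ℝ) :
    ContDiffOn ℝ ∞ (fun x : Fin d → ℝ => euclNorm x ^ c) {0}ᶜ := by
  simp_rw [euclNorm_eq_norm_toLp]
  have hne : ∀ x ∈ ({0}ᶜ : Set (Fin d → ℝ)), WithLp.toLp 2 x ≠ 0 := fun x hx => by simpa using hx
  exact (PiLp.contDiff_toLp.contDiffOn.norm ℝ hne).rpow_const_of_ne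
    fun x hx => norm_ne_zero_iff.mpr (hne x hx)

theorem sub_sqrt_le_euclNorm_of_mem_Icc {y z : Fin d → ℝ} (hz : z ∈ Icc y (y + 1)) :
    euclNorm y - Real.sqrt d ≤ euclNorm z := by
  have hdiff : euclNorm (z - y) ≤ Real.sqrt d := by
    refine Real.sqrt_le_sqrt ((Finset.sum_le_card_nsmul _ _ 1 fun i _ => ?_).trans (by simp))
    have hi : 0 ≤ z i - y i ∧ z i - y i ≤ 1 := by
      constructor <;> linarith [hz.1 i, hz.2 i, show (y + 1) i = y i + 1 from rfl]
    exact pow_le_one₀ hi.1 hi.2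
  have htri := norm_le_norm_add_norm_sub (WithLp.toLp 2 z) (WithLp.toLp 2 y)
  simp only [← WithLp.toLp_sub, ← euclNorm_eq_norm_toLp] at htri
  linarith

end Euclidean

theorem rpow_le_two_rpow_neg_mul {w e r : ℝ} (hw : w ≤ 0) (he : 0 < e) (her : e / 2 ≤ r) :
    r ^ w ≤ 2 ^ (-w) * e ^ w := by
  calc r ^ w ≤ (e / 2) ^ w := Real.rpow_le_rpow_of_nonpos (by positivity) her hw
    _ = 2 ^ (-w) * e ^ w := by
      rw [Real.div_rpow he.le zero_le_two, Real.rpow_neg zero_le_two]; ring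

/-- For `h(s) = ‖s‖^{dα}` with `α < 1` there are `C, R > 0` with
`|Δ₁h(y)| ≤ C ‖y‖^{d(α−1)}` whenever `‖y‖ ≥ R`. -/
theorem rinc_bound_far (d : ℕ) (α : ℝ) (hα : α < 1)
    (h : (Fin d → ℝ) → ℝ) (hh : ∀ x, h x = euclNorm x ^ ((d : ℝ) * α)) :
    ∃ C R : ℝ, 0 < C ∧ 0 < R ∧ ∀ y : Fin d → ℝ, R ≤ euclNorm y →
      |rinc h 1 y| ≤ C * euclNorm y ^ ((d : ℝ) * (α - 1)) := by
  obtain rfl : h = fun x => euclNorm x ^ ((d : ℝ) * α) := funext hh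
  set w : ℝ := d * (α - 1)
  have hw : w ≤ 0 := mul_nonpos_of_nonneg_of_nonpos d.cast_nonneg (by linarith)
  have hU : IsOpen ({0}ᶜ : Set (Fin d → ℝ)) := isOpen_compl_singleton
  have hsmooth := contDiffOn_euclNorm_rpow (d := d) (d * α)
  have hhom :
      PosHomogeneous w (iteratedPartial (List.finRange d) fun x => euclNorm x ^ (d * α)) := by
    convert (posHomogeneous_euclNorm_rpow _).iteratedPartial hsmooth _ using 1
    simp only [w, List.length_finRange]; ring
  obtain ⟨M, hM0, hM⟩ := hhom.exists_bound_euclNorm (hsmooth.iteratedPartial hU _).continuousOn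
  refine ⟨M * 2 ^ (-w), 2 * Real.sqrt d + 1, by positivity, by positivity, fun y hy => ?_⟩
  have hy0 : 0 < euclNorm y := by linarith [Real.sqrt_nonneg d]
  have hfar : ∀ z ∈ Icc y (y + 1), euclNorm y / 2 ≤ euclNorm z := fun z hz => by
    linarith [sub_sqrt_le_euclNorm_of_mem_Icc hz]
  have hbox : Icc y (y + 1) ⊆ {0}ᶜ := by
    rintro z hz rfl
    linarith [hfar 0 hz, euclNorm_zero (d := d)]
  obtain ⟨ξ, hξ, hξeq⟩ := exists_rinc_eq_iteratedPartial hU hsmooth hbox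
  calc |rinc _ 1 y| ≤ M * euclNorm ξ ^ w := hξeq ▸ hM ξ (hbox hξ)
    _ ≤ M * (2 ^ (-w) * euclNorm y ^ w) := by
      gcongr; exact rpow_le_two_rpow_neg_mul hw hy0 (hfar ξ hξ)
    _ = M * 2 ^ (-w) * euclNorm y ^ w := (mul_assoc _ _ _).symm
end
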